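/- arXiv:math/0101252 — 2 statements merged into one kernel-verified Lean document; each statement's English description precedes it below -/
import Mathlib

section
/- Let T be a structured upper triangular contraction on ℓ²(F_N^+) (i.e. T ∈ S(H)) and suppose |T(∅,∅)| = 1. Then T = T(∅,∅)·id, i.e. T is the scalar multiple of the identity by the unimodular number T(∅,∅). -/
open scoped ComplexOrder

noncomputable section

/-- Words over the alphabet `{1,…,N}`: the free monoid `F_N^+` (the empty list is `∅`). -/
abbrev Word (N : ℕ) := List (Fin N)

/-- The Hilbert space `ℓ²(F_N^+)`. -/
abbrev H2 (N : ℕ) : Type := lp (fun _ : Word N => ℂ) 2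

/-- The canonical orthonormal basis vector `e_σ`. -/
def eb {N : ℕ} (σ : Word N) : H2 N := lp.single 2 σ 1

/-- The matrix entry `T(σ,τ) = ⟨T e_τ, e_σ⟩` (inner product linear in the first argument). -/
def entry {N : ℕ} (T : H2 N →L[ℂ] H2 N) (σ τ : Word N) : ℂ := (T (eb τ)) σ

/-- `T` is structured upper triangular. -/
def IsSUT {N : ℕ} (T : H2 N →L[ℂ] H2 N) : Prop :=
  (∀ (a b : Fin N) (σ τ : Word N),
      entry T (a :: σ) (b :: τ) = if a = b then entry T σ τ else 0) ∧
  (∀ σ τ : Word N, τ.length < σ.length → entry T σ τ = 0)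

/-!
The structure condition forces every diagonal entry `T(τ,τ) = ⟨T e_τ, e_τ⟩` to equal `c = T(∅,∅)`. Since
`|c| = 1 ≥ ‖T e_τ‖`, this is the equality case of Cauchy–Schwarz, so `T e_τ = c e_τ` for every
basis vector, and hence `T = c · id`.
-/

theorem eq_inner_smul_of_norm_le_one_of_norm_inner_eq_one {𝕜 E : Type*} [RCLike 𝕜]
    [NormedAddCommGroup E] [InnerProductSpace 𝕜 E] {x y : E} (hx : ‖x‖ = 1) (hy : ‖y‖ ≤ 1)
    (hxy : ‖(inner 𝕜 x y : 𝕜)‖ = 1) : y = (inner 𝕜 x y : 𝕜) • x := by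
  have hy_eq : ‖y‖ = 1 :=
    le_antisymm hy (by simpa [hxy, hx] using norm_inner_le_norm (𝕜 := 𝕜) x y)
  have hx0 : x ≠ 0 := norm_ne_zero_iff.mp (by simp [hx])
  have hcs_eq : ‖(inner 𝕜 x y : 𝕜)‖ = ‖x‖ * ‖y‖ := by rw [hxy, hx, hy_eq, one_mul]
  have h := ((norm_inner_eq_norm_tfae 𝕜 x y).out 0 1).mp hcs_eq
  simpa [hx] using h.resolve_left hx0

section BasisVectors

variable {N : ℕ}

lemma norm_eb (σ : Word N) : ‖eb σ‖ = 1 := by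
  simp [eb, lp.norm_single (E := fun _ : Word N => ℂ) (p := 2) (by norm_num)]

lemma inner_eb_left (σ : Word N) (f : H2 N) : (inner ℂ (eb σ) f : ℂ) = f σ := by
  simp [eb, lp.inner_single_left]

lemma ext_eb {S T : H2 N →L[ℂ] H2 N} (h : ∀ σ, S (eb σ) = T (eb σ)) : S = T :=
  lp.ext_continuousLinearMap (by norm_num) fun σ => ContinuousLinearMap.ext_ring (h σ)

end BasisVectors

lemma IsSUT.entry_self {N : ℕ} {T : H2 N →L[ℂ] H2 N} (hT : IsSUT T) (τ : Word N) :
    entry T τ τ = entry T [] [] := by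
  induction τ with
  | nil => rfl
  | cons a τ ih => rw [hT.1 a a τ τ, if_pos rfl, ih]

theorem schur_unimodular_corner_general {N : ℕ}
    (T : H2 N →L[ℂ] H2 N) (hT : IsSUT T) (hTnorm : ‖T‖ ≤ 1)
    (hcorner : ‖entry T [] []‖ = 1) :
    T = entry T [] [] • (1 : H2 N →L[ℂ] H2 N) := by
  refine ext_eb fun τ => ?_
  have hdiag : (inner ℂ (eb τ) (T (eb τ)) : ℂ) = entry T [] [] := by
    rw [inner_eb_left, ← hT.entry_self τ, entry]
  have hcontr : ‖T (eb τ)‖ ≤ 1 := (T.unit_le_opNorm _ (norm_eb τ).le).trans hTnorm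
  rw [eq_inner_smul_of_norm_le_one_of_norm_inner_eq_one (norm_eb τ) hcontr (hdiag ▸ hcorner),
    hdiag]
  rfl

/-- If `T ∈ S(H)` and `|T(∅,∅)| = 1` then `T = T(∅,∅)·id`. -/
theorem schur_unimodular_corner {N : ℕ} (hN : 1 ≤ N)
    (T : H2 N →L[ℂ] H2 N) (hT : IsSUT T) (hTnorm : ‖T‖ ≤ 1)
    (hcorner : ‖entry T [] []‖ = 1) :
    T = entry T [] [] • (1 : H2 N →L[ℂ] H2 N) :=
  schur_unimodular_corner_general T hT hTnorm hcorner
end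
end

section
/- Let F be a complex Hilbert space, X_1,…,X_N ∈ B(F), z, η_1,…,η_N ∈ F, and w ∈ ℂ, and suppose the block operator M : (⊕_{k=1}^N F) ⊕ ℂ → F ⊕ ℂ defined by M((f_k)_{k=1}^N, λ) = (Σ_{k=1}^N X_k f_k + λ z, Σ_{k=1}^N ⟨f_k, η_k⟩ + w λ) is a contraction (‖M‖ ≤ 1). Then there exists a (necessarily unique) structured upper triangular contraction T on ℓ²(F_N^+) whose first-row entries are T(∅,∅) = w and, for every nonempty word σ = i_1 i_2 ⋯ i_j, T(∅,σ) = ⟨X_{i_2} X_{i_3} ⋯ X_{i_j} z, η_{i_1}⟩ (interpreted as ⟨z, η_{i_1}⟩ when j = 1); in particular ‖T‖ ≤ 1. -/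
open scoped ComplexOrder

noncomputable section

/-!
Let `r` be the prescribed first row. The only structured upper triangular candidate is the
operator whose column `τ` is `∑_{σ ≤ τ} r(τ ∖ σ) e_σ` (`σ ≤ τ`: `σ` is a prefix of `τ`), and it
suffices to bound it on finitely supported `x`. Put `h(σ) = ∑_ρ x_{σρ} X_ρ z`, where
`X_ρ = X_{ρ₁} ⋯ X_{ρ_n}`, and `y(σ) = (Tx)(σ)`. Splitting off the first letter of `ρ` gives
`M((h(σk))_k, x_σ) = (h(σ), y(σ))`, so contractivity of `M` yields
`‖h(σ)‖² + |y(σ)|² ≤ ∑_k ‖h(σk)‖² + |x_σ|²`. Summed over the prefix closure of the support of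
`x`, the `h`-terms telescope and leave `‖Tx‖² + ‖h(∅)‖² ≤ ‖x‖²`.
-/

namespace List

variable {α R V W : Type*} [DecidableEq α] [Semiring R] [AddCommMonoid V] [Module R V]
  [AddCommMonoid W] [Module R W]

def prefixSum (x : List α →₀ R) (g : List α → V) (σ : List α) : V :=
  x.sum fun μ a => if σ <+: μ then a • g (μ.drop σ.length) else 0

theorem ite_prefix_eq_add_sum [Fintype α] (σ μ : List α) (v : List α → V) :
    (if σ <+: μ then v (μ.drop σ.length) else 0) =
      (if μ = σ then v [] else 0) +
        ∑ k, if σ ++ [k] <+: μ then v (k :: μ.drop (σ ++ [k]).length) else 0 := by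
  by_cases h : σ <+: μ
  · obtain ⟨ρ, rfl⟩ := h
    cases ρ with
    | nil =>
      have hk (k : α) : ¬ σ ++ [k] <+: σ := fun hk => by simpa using hk.length_le
      simp [hk]
    | cons k₀ ρ => simp [eq_comm]
  · have hk (k : α) : ¬ σ ++ [k] <+: μ := fun hk => h ((prefix_append σ [k]).trans hk)
    have hμ : μ ≠ σ := by rintro rfl; exact h (prefix_refl μ)
    simp [h, hk, hμ]

theorem prefixSum_eq_sum_add [Fintype α] (x : List α →₀ R) (g : List α → V) (σ : List α) :
    prefixSum x g σ = ∑ k, prefixSum x (fun ρ => g (k :: ρ)) (σ ++ [k]) + x σ • g [] := by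
  simp only [prefixSum, Finsupp.sum]
  rw [Finset.sum_congr rfl fun μ _ => ite_prefix_eq_add_sum σ μ fun ρ => x μ • g ρ,
    Finset.sum_add_distrib, Finset.sum_comm, add_comm]
  congr 1
  by_cases hσ : σ ∈ x.support
  · simp [hσ]
  · simp [hσ, Finsupp.notMem_support_iff.mp hσ]

theorem prefixSum_map (x : List α →₀ R) (g : List α → V) (L : V →ₗ[R] W) (σ : List α) :
    prefixSum x (fun ρ => L (g ρ)) σ = L (prefixSum x g σ) := by
  simp [prefixSum, map_finsuppSum, apply_ite]

theorem prefixSum_eq_zero (x : List α →₀ R) (g : List α → V) {σ : List α}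
    (hσ : ∀ μ ∈ x.support, ¬ σ <+: μ) : prefixSum x g σ = 0 :=
  Finset.sum_eq_zero fun μ hμ => if_neg (hσ μ hμ)

theorem sum_sum_append_singleton_add_le [Fintype α] (S : Finset (List α)) {g : List α → ℝ}
    (hg : ∀ μ, 0 ≤ g μ) (hS : ∀ μ ∉ S, g μ = 0) :
    ∑ σ ∈ S, ∑ k, g (σ ++ [k]) + g [] ≤ ∑ σ ∈ S, g σ := by
  set A := insert [] ((S ×ˢ Finset.univ).image fun p : List α × α => p.1 ++ [p.2])
  have hinj : Set.InjOn (fun p : List α × α => p.1 ++ [p.2]) ↑(S ×ˢ (Finset.univ : Finset α)) := by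
    rintro ⟨σ, k⟩ - ⟨σ', k'⟩ - h
    obtain ⟨rfl, h⟩ := append_inj' h rfl
    simpa using h
  have hnil : [] ∉ (S ×ˢ Finset.univ).image fun p : List α × α => p.1 ++ [p.2] := by simp
  calc ∑ σ ∈ S, ∑ k, g (σ ++ [k]) + g [] = ∑ μ ∈ A, g μ := by
        rw [Finset.sum_insert hnil, Finset.sum_image hinj, Finset.sum_product, add_comm]
    _ ≤ ∑ μ ∈ A ∪ S, g μ :=
        Finset.sum_le_sum_of_subset_of_nonneg Finset.subset_union_left fun μ _ _ => hg μ
    _ = ∑ σ ∈ S, g σ :=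
        (Finset.sum_subset Finset.subset_union_right fun μ _ hμ => hS μ hμ).symm

end List

theorem lp.norm_sq_eq_sum {ι : Type*} {E : ι → Type*} [∀ i, NormedAddCommGroup (E i)]
    (u : lp E 2) (S : Finset ι) (hS : ∀ i ∉ S, u i = 0) :
    ‖u‖ ^ 2 = ∑ i ∈ S, ‖u i‖ ^ 2 := by
  have h := lp.norm_rpow_eq_tsum (p := 2) (by norm_num) u
  simp only [ENNReal.toReal_ofNat, Real.rpow_two] at h
  rw [h, tsum_eq_sum fun i hi => by simp [hS i hi]]

theorem exists_opNorm_le_apply_eq_of_dense_span {𝕜 ι E F : Type*} [NontriviallyNormedField 𝕜]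
    [NormedAddCommGroup E] [NormedSpace 𝕜 E] [NormedAddCommGroup F] [NormedSpace 𝕜 F]
    [CompleteSpace F] {b : ι → E} (hb : Dense (Submodule.span 𝕜 (Set.range b) : Set E))
    (v : ι → F) {C : ℝ} (hC : 0 ≤ C)
    (h : ∀ x : ι →₀ 𝕜, ‖Finsupp.linearCombination 𝕜 v x‖ ≤ C * ‖Finsupp.linearCombination 𝕜 b x‖) :
    ∃ T : E →L[𝕜] F, ‖T‖ ≤ C ∧ ∀ i, T (b i) = v i := by
  have hdense : DenseRange (Finsupp.linearCombination 𝕜 b) := by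
    rwa [DenseRange, ← LinearMap.coe_range, Finsupp.range_linearCombination]
  refine ⟨_, LinearMap.opNorm_extendOfNorm_le hdense hC h, fun i => ?_⟩
  simpa using LinearMap.extendOfNorm_eq hdense ⟨C, h⟩ (Finsupp.single i 1)

theorem lp.linearCombination_apply {𝕜 ι : Type*} [NormedField 𝕜] {p : ENNReal} [Fact (1 ≤ p)]
    (v : ι → lp (fun _ : ι => 𝕜) p) (x : ι →₀ 𝕜) (i : ι) :
    Finsupp.linearCombination 𝕜 v x i = x.sum fun j a => a * v j i := by
  rw [Finsupp.linearCombination_apply, Finsupp.sum, lp.coeFn_sum, Finset.sum_apply]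
  rfl

variable {N : ℕ}

theorem eb_apply (σ τ : Word N) : eb σ τ = if τ = σ then 1 else 0 := by
  simp [eb, lp.single_apply, Pi.single_apply]

theorem coe_default_hilbertBasis : ⇑(default : HilbertBasis (Word N) ℂ (H2 N)) = eb := by
  funext σ
  rw [← HilbertBasis.repr_symm_single]
  rfl

theorem dense_span_eb : Dense (Submodule.span ℂ (Set.range (eb (N := N))) : Set (H2 N)) := by
  rw [Submodule.dense_iff_topologicalClosure_eq_top, ← coe_default_hilbertBasis]
  exact HilbertBasis.dense_span _

theorem linearCombination_eb_apply (x : Word N →₀ ℂ) (σ : Word N) :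
    Finsupp.linearCombination ℂ eb x σ = x σ := by
  simp only [lp.linearCombination_apply, eb_apply, mul_ite, mul_one, mul_zero]
  exact x.sum_ite_self_eq σ

def sutColumn (r : Word N → ℂ) (τ : Word N) : H2 N :=
  ∑ σ ∈ τ.inits.toFinset, r (τ.drop σ.length) • eb σ

theorem sutColumn_apply (r : Word N → ℂ) (τ σ : Word N) :
    sutColumn r τ σ = if σ <+: τ then r (τ.drop σ.length) else 0 := by
  rw [sutColumn, lp.coeFn_sum, Finset.sum_apply]
  simp [eb_apply]

theorem linearCombination_sutColumn_apply (r : Word N → ℂ) (x : Word N →₀ ℂ) (σ : Word N) :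
    Finsupp.linearCombination ℂ (sutColumn r) x σ = List.prefixSum x r σ := by
  simp [lp.linearCombination_apply, sutColumn_apply, List.prefixSum]

variable {T T' : H2 N →L[ℂ] H2 N} {r : Word N → ℂ}

theorem isSUT_of_apply_eb (hT : ∀ τ, T (eb τ) = sutColumn r τ) : IsSUT T := by
  simp only [IsSUT, entry, hT, sutColumn_apply]
  refine ⟨fun a b σ τ => ?_, fun σ τ hlt => if_neg fun h => hlt.not_ge h.length_le⟩
  by_cases hab : a = b <;> simp [hab]

theorem entry_nil_of_apply_eb (hT : ∀ τ, T (eb τ) = sutColumn r τ) (τ : Word N) :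
    entry T [] τ = r τ := by
  simp [entry, hT, sutColumn_apply]

theorem IsSUT.ext (hT : IsSUT T) (hT' : IsSUT T') (h : ∀ τ, entry T [] τ = entry T' [] τ) :
    T = T' := by
  have hentry : ∀ σ τ, entry T σ τ = entry T' σ τ := by
    intro σ
    induction σ with
    | nil => exact h
    | cons a σ ih =>
      rintro (_ | ⟨b, τ⟩)
      · rw [hT.2 _ _ (by simp), hT'.2 _ _ (by simp)]
      · rw [hT.1, hT'.1, ih]
  refine ContinuousLinearMap.ext_on dense_span_eb ?_
  rintro _ ⟨τ, rfl⟩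
  exact lp.ext (funext fun σ => hentry σ τ)

section Transfer

variable {F : Type*} [NormedAddCommGroup F] [InnerProductSpace ℂ F]
  (X : Fin N → F →L[ℂ] F) (z : F) (η : Fin N → F) (w : ℂ)

def wordApply (ρ : Word N) : F := (ρ.map X).prod z

def firstRow : Word N → ℂ
  | [] => w
  | i :: ρ => inner ℂ (η i) (wordApply X z ρ)

def IsContractiveBlock : Prop :=
  ∀ (f : Fin N → F) (lam : ℂ),
    ‖∑ k, X k (f k) + lam • z‖ ^ 2 + ‖∑ k, inner ℂ (η k) (f k) + w * lam‖ ^ 2 ≤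
      ∑ k, ‖f k‖ ^ 2 + ‖lam‖ ^ 2

theorem prefixSum_wordApply_eq (x : Word N →₀ ℂ) (σ : Word N) :
    List.prefixSum x (wordApply X z) σ =
      ∑ k, X k (List.prefixSum x (wordApply X z) (σ ++ [k])) + x σ • z := by
  rw [List.prefixSum_eq_sum_add]
  simp only [wordApply, List.map_cons, List.prod_cons, List.map_nil, List.prod_nil]
  congr 1
  exact Finset.sum_congr rfl fun k _ => List.prefixSum_map x _ (X k).toLinearMap _

theorem prefixSum_firstRow_eq (x : Word N →₀ ℂ) (σ : Word N) :
    List.prefixSum x (firstRow X z η w) σ =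
      ∑ k, inner ℂ (η k) (List.prefixSum x (wordApply X z) (σ ++ [k])) + w * x σ := by
  rw [List.prefixSum_eq_sum_add, smul_eq_mul, mul_comm]
  congr 1
  exact Finset.sum_congr rfl fun k _ =>
    List.prefixSum_map x _ (innerSL ℂ (η k)).toLinearMap _

variable {X z η w}

theorem isContractiveBlock_of_opNorm_le_one
    {M : WithLp 2 ((PiLp 2 fun _ : Fin N => F) × ℂ) →L[ℂ] WithLp 2 (F × ℂ)}
    (hM : ∀ (f : Fin N → F) (lam : ℂ),
        M ((WithLp.equiv 2 _).symm ((WithLp.equiv 2 _).symm f, lam)) =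
          (WithLp.equiv 2 _).symm
            (∑ k, X k (f k) + lam • z, (∑ k, (inner ℂ (η k) (f k) : ℂ)) + w * lam))
    (hMnorm : ‖M‖ ≤ 1) : IsContractiveBlock X z η w := by
  intro f lam
  have hv := (M.le_of_opNorm_le hMnorm
    ((WithLp.equiv 2 _).symm ((WithLp.equiv 2 _).symm f, lam))).trans_eq (one_mul _)
  have hsq := pow_le_pow_left₀ (norm_nonneg _) hv 2
  rw [hM, WithLp.prod_norm_sq_eq_of_L2, WithLp.prod_norm_sq_eq_of_L2] at hsq
  simpa [PiLp.norm_sq_eq_of_L2] using hsq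

theorem norm_sq_prefixSum_add_le
    (hcontr : IsContractiveBlock X z η w)
    (x : Word N →₀ ℂ) (σ : Word N) :
    ‖List.prefixSum x (wordApply X z) σ‖ ^ 2 +
        ‖List.prefixSum x (firstRow X z η w) σ‖ ^ 2 ≤
      ∑ k, ‖List.prefixSum x (wordApply X z) (σ ++ [k])‖ ^ 2 + ‖x σ‖ ^ 2 := by
  rw [prefixSum_wordApply_eq X z x σ, prefixSum_firstRow_eq X z η w x σ]
  exact hcontr _ _

theorem norm_linearCombination_sutColumn_firstRow_le
    (hcontr : IsContractiveBlock X z η w)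
    (x : Word N →₀ ℂ) :
    ‖Finsupp.linearCombination ℂ (sutColumn (firstRow X z η w)) x‖ ≤
      ‖Finsupp.linearCombination ℂ eb x‖ := by
  set S := x.support.biUnion fun μ => μ.inits.toFinset
  have hS : ∀ σ ∉ S, ∀ μ ∈ x.support, ¬ σ <+: μ := fun σ hσ μ hμ hp =>
    hσ (Finset.mem_biUnion.2 ⟨μ, hμ, by simpa using hp⟩)
  have hxS : ∀ σ ∉ S, x σ = 0 := fun σ hσ =>
    Finsupp.notMem_support_iff.mp fun h => hS σ hσ σ h (List.prefix_refl σ)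
  have hsum := Finset.sum_le_sum fun σ (_ : σ ∈ S) => norm_sq_prefixSum_add_le hcontr x σ
  simp only [Finset.sum_add_distrib] at hsum
  have htele := List.sum_sum_append_singleton_add_le S
    (g := fun σ => ‖List.prefixSum x (wordApply X z) σ‖ ^ 2) (fun _ => sq_nonneg _)
    fun σ hσ => by simp [List.prefixSum_eq_zero x _ (hS σ hσ)]
  have hy : ‖Finsupp.linearCombination ℂ (sutColumn (firstRow X z η w)) x‖ ^ 2 =
      ∑ σ ∈ S, ‖List.prefixSum x (firstRow X z η w) σ‖ ^ 2 := by
    rw [lp.norm_sq_eq_sum _ S fun σ hσ => ?_]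
    · simp_rw [linearCombination_sutColumn_apply]
    · rw [linearCombination_sutColumn_apply, List.prefixSum_eq_zero x _ (hS σ hσ)]
  have hx : ‖Finsupp.linearCombination ℂ eb x‖ ^ 2 = ∑ σ ∈ S, ‖x σ‖ ^ 2 := by
    rw [lp.norm_sq_eq_sum _ S fun σ hσ => ?_]
    · simp_rw [linearCombination_eb_apply]
    · rw [linearCombination_eb_apply, hxS σ hσ]
  refine (pow_le_pow_iff_left₀ (norm_nonneg _) (norm_nonneg _) two_ne_zero).mp ?_
  rw [hy, hx]
  linarith [sq_nonneg ‖List.prefixSum x (wordApply X z) []‖]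

end Transfer

theorem transfer_map_contraction_general {N : ℕ}
    (F : Type*) [NormedAddCommGroup F] [InnerProductSpace ℂ F]
    (X : Fin N → F →L[ℂ] F) (z : F) (η : Fin N → F) (w : ℂ)
    (M : WithLp 2 ((PiLp 2 fun _ : Fin N => F) × ℂ) →L[ℂ] WithLp 2 (F × ℂ))
    (hM : ∀ (f : Fin N → F) (lam : ℂ),
        M ((WithLp.equiv 2 _).symm ((WithLp.equiv 2 _).symm f, lam)) =
          (WithLp.equiv 2 _).symm
            (∑ k, X k (f k) + lam • z, (∑ k, (inner ℂ (η k) (f k) : ℂ)) + w * lam))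
    (hMnorm : ‖M‖ ≤ 1) :
    ∃! T : H2 N →L[ℂ] H2 N,
      IsSUT T ∧ ‖T‖ ≤ 1 ∧ entry T [] [] = w ∧
        ∀ (i : Fin N) (rest : Word N),
          entry T [] (i :: rest) = (inner ℂ (η i) (((rest.map X).prod) z) : ℂ) := by
  obtain ⟨T, hTnorm, hT⟩ := exists_opNorm_le_apply_eq_of_dense_span dense_span_eb
    (sutColumn (firstRow X z η w)) zero_le_one fun x => by
      simpa using norm_linearCombination_sutColumn_firstRow_le
        (isContractiveBlock_of_opNorm_le_one hM hMnorm) x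
  have hrow := entry_nil_of_apply_eb hT
  refine ⟨T, ⟨isSUT_of_apply_eb hT, hTnorm, hrow [], fun i ρ => hrow (i :: ρ)⟩, ?_⟩
  rintro T' ⟨hT', -, hw, hrow'⟩
  refine hT'.ext (isSUT_of_apply_eb hT) ?_
  rintro (_ | ⟨i, ρ⟩)
  · rw [hw, hrow]
    rfl
  · rw [hrow', hrow]
    rfl

/-- If the block operator `M((f_k)_k, λ) = (∑ₖ X_k f_k + λ z,
∑ₖ ⟨f_k, η_k⟩ + w λ)` is a contraction, then there is a (necessarily unique) structured upper
triangular contraction `T` on `ℓ²(F_N^+)` with `T(∅,∅) = w` and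
`T(∅, i₁i₂⋯i_j) = ⟨X_{i₂}⋯X_{i_j} z, η_{i₁}⟩`. -/
theorem transfer_map_contraction {N : ℕ} (hN : 1 ≤ N)
    (F : Type*) [NormedAddCommGroup F] [InnerProductSpace ℂ F] [CompleteSpace F]
    (X : Fin N → F →L[ℂ] F) (z : F) (η : Fin N → F) (w : ℂ)
    (M : WithLp 2 ((PiLp 2 fun _ : Fin N => F) × ℂ) →L[ℂ] WithLp 2 (F × ℂ))
    (hM : ∀ (f : Fin N → F) (lam : ℂ),
        M ((WithLp.equiv 2 _).symm ((WithLp.equiv 2 _).symm f, lam)) =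
          (WithLp.equiv 2 _).symm
            (∑ k, X k (f k) + lam • z, (∑ k, (inner ℂ (η k) (f k) : ℂ)) + w * lam))
    (hMnorm : ‖M‖ ≤ 1) :
    ∃! T : H2 N →L[ℂ] H2 N,
      IsSUT T ∧ ‖T‖ ≤ 1 ∧ entry T [] [] = w ∧
        ∀ (i : Fin N) (rest : Word N),
          entry T [] (i :: rest) = (inner ℂ (η i) (((rest.map X).prod) z) : ℂ) :=
  transfer_map_contraction_general F X z η w M hM hMnorm
end
end
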